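/- Let n ≥ 1 and L ≥ 1, and fix hidden-layer widths U_1, …, U_L ≥ 1 (set U_0 = n). Let σ : ℝ → ℝ be an arbitrary activation function. For a point x ∈ ℝ^{U_{l-1}}, a hidden layer with weight matrix W^{(l)} : Fin U_l → Fin U_{l-1} → ℝ and bias b^{(l)} : Fin U_l → ℝ computes y^{(l)}_i = σ(Σ_{j} W^{(l)}_{i j} y^{(l-1)}_j + b^{(l)}_i) with y^{(0)} = x. The network output is h(x) = Σ_{j} v_j y^{(L)}_j + c for output weights v : Fin U_L → ℝ and output bias c ∈ ℝ. Let P = Σ_{l=1}^{L} (U_{l-1} + 1)·U_l + U_L + 1 be the total number of parameters. Let 𝒱 ⊆ ℝ be a finite set with |𝒱| = V ≥ 1. Let H ⊆ ((Fin n → ℝ) → ℝ) be the set of all functions h realized by some choice of all parameters (all weights W^{(l)}, biases b^{(l)}, output weights v, and output bias c) taking values in 𝒱. Then H is finite and |H| · ∏_{l=1}^{L} (U_l)! ≤ V^P + (∏_{l=1}^{L} (U_l)! − 1) · V^{P−1}. -/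
import Mathlib


/-- The output of the first `l` hidden layers of a fully connected network with
layer widths `U 0, U 1, …`, activation `σ`, weights `W` and biases `b`:
`y⁰ = x` and `yˡ⁺¹ i = σ (∑ j, W l i j * yˡ j + b l i)`. -/
noncomputable def layerOut (σ : ℝ → ℝ) (U : ℕ → ℕ)
    (W : (l : ℕ) → Fin (U (l + 1)) → Fin (U l) → ℝ)
    (b : (l : ℕ) → Fin (U (l + 1)) → ℝ) :
    (l : ℕ) → (Fin (U 0) → ℝ) → Fin (U l) → ℝ
  | 0 => fun x => x
  | (l + 1) => fun x i => σ ((∑ j, W l i j * layerOut σ U W b l x j) + b l i)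

set_option synthInstance.maxHeartbeats 1000000
set_option maxHeartbeats 4000000

section NN

variable (U : ℕ → ℕ) (L : ℕ) (𝒱 : Finset ℝ)

abbrev NNState := ((l : Fin L) → Fin (U (l.1 + 1)) → Fin (U l.1) → 𝒱) ×
  ((l : Fin L) → Fin (U (l.1 + 1)) → 𝒱) × (Fin (U L) → 𝒱) × 𝒱

abbrev NNGroup := (l : Fin L) → Equiv.Perm (Fin (U (l.1 + 1)))

def perm0 (g : NNGroup U L) : (l : ℕ) → Equiv.Perm (Fin (U l))
  | 0 => 1
  | (l + 1) => if h : l < L then g ⟨l, h⟩ else 1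

lemma perm0_succ (g : NNGroup U L) (l : ℕ) (h : l < L) :
    perm0 U L g (l + 1) = g ⟨l, h⟩ := dif_pos h

lemma perm0_succ_neg (g : NNGroup U L) (l : ℕ) (h : ¬ l < L) :
    perm0 U L g (l + 1) = 1 := dif_neg h

lemma perm0_one : ∀ l, perm0 U L (1 : NNGroup U L) l = 1
  | 0 => rfl
  | (l + 1) => by
      by_cases h : l < L
      · rw [perm0_succ U L _ l h]; rfl
      · rw [perm0_succ_neg U L _ l h]

lemma perm0_mul (g h : NNGroup U L) :
    ∀ l, perm0 U L (g * h) l = perm0 U L g l * perm0 U L h l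
  | 0 => (one_mul 1).symm
  | (l + 1) => by
      by_cases h' : l < L
      · rw [perm0_succ U L _ l h', perm0_succ U L _ l h', perm0_succ U L _ l h']; rfl
      · rw [perm0_succ_neg U L _ l h', perm0_succ_neg U L _ l h', perm0_succ_neg U L _ l h',
          one_mul]

instance : SMul (NNGroup U L) (NNState U L 𝒱) where
  smul g s := ⟨fun l i j => s.1 l ((g l).symm i) ((perm0 U L g l.1).symm j),
    fun l i => s.2.1 l ((g l).symm i),
    fun j => s.2.2.1 ((perm0 U L g L).symm j),
    s.2.2.2⟩

lemma smul_W (g : NNGroup U L) (s : NNState U L 𝒱) (l i j) :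
    (g • s).1 l i j = s.1 l ((g l).symm i) ((perm0 U L g l.1).symm j) := rfl
lemma smul_b (g : NNGroup U L) (s : NNState U L 𝒱) (l i) :
    (g • s).2.1 l i = s.2.1 l ((g l).symm i) := rfl
lemma smul_v (g : NNGroup U L) (s : NNState U L 𝒱) (j) :
    (g • s).2.2.1 j = s.2.2.1 ((perm0 U L g L).symm j) := rfl
lemma smul_c (g : NNGroup U L) (s : NNState U L 𝒱) :
    (g • s).2.2.2 = s.2.2.2 := rfl

instance : MulAction (NNGroup U L) (NNState U L 𝒱) where
  one_smul s := by
    refine Prod.ext ?_ (Prod.ext ?_ (Prod.ext ?_ rfl))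
    · funext l i j
      rw [smul_W, perm0_one]; rfl
    · funext l i
      rw [smul_b]; rfl
    · funext j
      rw [smul_v, perm0_one]; rfl
  mul_smul g h s := by
    refine Prod.ext ?_ (Prod.ext ?_ (Prod.ext ?_ rfl))
    · funext l i j
      rw [smul_W, smul_W, smul_W, perm0_mul]
      rfl
    · funext l i
      rw [smul_b, smul_b, smul_b]
      rfl
    · funext j
      rw [smul_v, smul_v, smul_v, perm0_mul]
      rfl

end NN

section NN2

variable (σ : ℝ → ℝ) (U : ℕ → ℕ) (L : ℕ) (𝒱 : Finset ℝ)

/-- Extend the weights of a state to all layer indices. -/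
noncomputable def Wext (s : NNState U L 𝒱) :
    (l : ℕ) → Fin (U (l + 1)) → Fin (U l) → ℝ :=
  fun l => if h : l < L then fun i j => (s.1 ⟨l, h⟩ i j : ℝ) else fun _ _ => 0

noncomputable def bext (s : NNState U L 𝒱) : (l : ℕ) → Fin (U (l + 1)) → ℝ :=
  fun l => if h : l < L then fun i => (s.2.1 ⟨l, h⟩ i : ℝ) else fun _ => 0

lemma Wext_pos (s : NNState U L 𝒱) (l : ℕ) (h : l < L) :
    Wext U L 𝒱 s l = fun i j => (s.1 ⟨l, h⟩ i j : ℝ) := dif_pos h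
lemma bext_pos (s : NNState U L 𝒱) (l : ℕ) (h : l < L) :
    bext U L 𝒱 s l = fun i => (s.2.1 ⟨l, h⟩ i : ℝ) := dif_pos h

/-- `layerOut` only depends on the weights of layers below `m`. -/
lemma layerOut_congr (W W' : (l : ℕ) → Fin (U (l + 1)) → Fin (U l) → ℝ)
    (b b' : (l : ℕ) → Fin (U (l + 1)) → ℝ) :
    ∀ m, (∀ l < m, W l = W' l) → (∀ l < m, b l = b' l) →
      layerOut σ U W b m = layerOut σ U W' b' m
  | 0, _, _ => rfl
  | (m + 1), hW, hb => by
      funext x i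
      show σ ((∑ j, W m i j * layerOut σ U W b m x j) + b m i) = _
      rw [layerOut_congr W W' b b' m (fun l hl => hW l (hl.trans (Nat.lt_succ_self m)))
        (fun l hl => hb l (hl.trans (Nat.lt_succ_self m))),
        hW m (Nat.lt_succ_self m), hb m (Nat.lt_succ_self m)]
      rfl

/-- Behaviour of `layerOut` under a family of permutations of the neurons. -/
lemma layerOut_perm (W : (l : ℕ) → Fin (U (l + 1)) → Fin (U l) → ℝ)
    (b : (l : ℕ) → Fin (U (l + 1)) → ℝ) (π : (l : ℕ) → Equiv.Perm (Fin (U l)))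
    (hπ0 : π 0 = 1) :
    ∀ m (x : Fin (U 0) → ℝ) (i : Fin (U m)),
      layerOut σ U (fun l i j => W l ((π (l + 1)).symm i) ((π l).symm j))
        (fun l i => b l ((π (l + 1)).symm i)) m x i
        = layerOut σ U W b m x ((π m).symm i)
  | 0, x, i => by show x i = x ((π 0).symm i); rw [hπ0]; rfl
  | (m + 1), x, i => by
      show σ ((∑ j, W m ((π (m + 1)).symm i) ((π m).symm j) *
          layerOut σ U _ _ m x j) + b m ((π (m + 1)).symm i)) = _
      have hy : ∀ j, layerOut σ U (fun l i j => W l ((π (l + 1)).symm i) ((π l).symm j))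
          (fun l i => b l ((π (l + 1)).symm i)) m x j = layerOut σ U W b m x ((π m).symm j) :=
        layerOut_perm W b π hπ0 m x
      have hsum : (∑ j, W m ((π (m + 1)).symm i) ((π m).symm j) *
          layerOut σ U (fun l i j => W l ((π (l + 1)).symm i) ((π l).symm j))
            (fun l i => b l ((π (l + 1)).symm i)) m x j)
          = ∑ j, W m ((π (m + 1)).symm i) j * layerOut σ U W b m x j := by
        rw [← Equiv.sum_comp (π m).symm
          (fun j => W m ((π (m + 1)).symm i) j * layerOut σ U W b m x j)]
        exact Finset.sum_congr rfl fun j _ => by rw [hy j]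
      rw [hsum]
      rfl

lemma Wext_smul (g : NNGroup U L) (s : NNState U L 𝒱) (l : ℕ) :
    Wext U L 𝒱 (g • s) l =
      fun i j => Wext U L 𝒱 s l ((perm0 U L g (l + 1)).symm i) ((perm0 U L g l).symm j) := by
  by_cases h : l < L
  · rw [Wext_pos U L 𝒱 _ l h, Wext_pos U L 𝒱 s l h, perm0_succ U L g l h]
    funext i j
    exact congrArg _ (smul_W U L 𝒱 g s ⟨l, h⟩ i j)
  · rw [Wext, dif_neg h, Wext, dif_neg h]

lemma bext_smul (g : NNGroup U L) (s : NNState U L 𝒱) (l : ℕ) :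
    bext U L 𝒱 (g • s) l = fun i => bext U L 𝒱 s l ((perm0 U L g (l + 1)).symm i) := by
  by_cases h : l < L
  · rw [bext_pos U L 𝒱 _ l h, bext_pos U L 𝒱 s l h, perm0_succ U L g l h]
    funext i
    exact congrArg _ (smul_b U L 𝒱 g s ⟨l, h⟩ i)
  · rw [bext, dif_neg h, bext, dif_neg h]

/-- The function computed by a state. -/
noncomputable def realize (s : NNState U L 𝒱) : (Fin (U 0) → ℝ) → ℝ :=
  fun x => (∑ j, (s.2.2.1 j : ℝ) * layerOut σ U (Wext U L 𝒱 s) (bext U L 𝒱 s) L x j) + s.2.2.2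

lemma realize_smul (g : NNGroup U L) (s : NNState U L 𝒱) :
    realize σ U L 𝒱 (g • s) = realize σ U L 𝒱 s := by
  funext x
  show (∑ j, ((g • s).2.2.1 j : ℝ) *
      layerOut σ U (Wext U L 𝒱 (g • s)) (bext U L 𝒱 (g • s)) L x j) + ((g • s).2.2.2 : ℝ)
      = _
  have hW : Wext U L 𝒱 (g • s) = fun l i j =>
      Wext U L 𝒱 s l ((perm0 U L g (l + 1)).symm i) ((perm0 U L g l).symm j) :=
    funext (Wext_smul U L 𝒱 g s)
  have hb : bext U L 𝒱 (g • s) = fun l i =>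
      bext U L 𝒱 s l ((perm0 U L g (l + 1)).symm i) :=
    funext (bext_smul U L 𝒱 g s)
  rw [hW, hb]
  have hy : ∀ j, layerOut σ U
      (fun l i j => Wext U L 𝒱 s l ((perm0 U L g (l + 1)).symm i) ((perm0 U L g l).symm j))
      (fun l i => bext U L 𝒱 s l ((perm0 U L g (l + 1)).symm i)) L x j
      = layerOut σ U (Wext U L 𝒱 s) (bext U L 𝒱 s) L x ((perm0 U L g L).symm j) :=
    layerOut_perm σ U (Wext U L 𝒱 s) (bext U L 𝒱 s) (perm0 U L g) rfl L x
  have : (∑ j, ((g • s).2.2.1 j : ℝ) * layerOut σ U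
      (fun l i j => Wext U L 𝒱 s l ((perm0 U L g (l + 1)).symm i) ((perm0 U L g l).symm j))
      (fun l i => bext U L 𝒱 s l ((perm0 U L g (l + 1)).symm i)) L x j)
      = ∑ j, (s.2.2.1 j : ℝ) *
          layerOut σ U (Wext U L 𝒱 s) (bext U L 𝒱 s) L x j := by
    rw [← Equiv.sum_comp (perm0 U L g L).symm
      (fun j => (s.2.2.1 j : ℝ) * layerOut σ U (Wext U L 𝒱 s) (bext U L 𝒱 s) L x j)]
    exact Finset.sum_congr rfl fun j _ => by
      rw [hy j, smul_v]
  rw [this, smul_c]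
  rfl

end NN2

section NN3

variable (U : ℕ → ℕ) (L : ℕ) (𝒱 : Finset ℝ)

lemma card_NNState : Fintype.card (NNState U L 𝒱) =
    𝒱.card ^ ((∑ l ∈ Finset.range L, (U l + 1) * U (l + 1)) + U L + 1) := by
  have : Fintype.card (NNState U L 𝒱) =
      (∏ l : Fin L, (𝒱.card ^ U l.1) ^ U (l.1 + 1)) *
        ((∏ l : Fin L, 𝒱.card ^ U (l.1 + 1)) * (𝒱.card ^ U L * 𝒱.card)) := by
    simp [Fintype.card_prod, Fintype.card_pi, Fintype.card_fun, Fintype.card_coe,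
      Fintype.card_fin]
  rw [this]
  have h1 : (∏ l : Fin L, (𝒱.card ^ U l.1) ^ U (l.1 + 1)) =
      𝒱.card ^ (∑ l ∈ Finset.range L, U l * U (l + 1)) := by
    rw [← Finset.prod_pow_eq_pow_sum]
    rw [← Fin.prod_univ_eq_prod_range (fun l => 𝒱.card ^ (U l * U (l + 1))) L]
    exact Finset.prod_congr rfl fun l _ => by rw [pow_mul]
  have h2 : (∏ l : Fin L, 𝒱.card ^ U (l.1 + 1)) =
      𝒱.card ^ (∑ l ∈ Finset.range L, U (l + 1)) := by
    rw [← Finset.prod_pow_eq_pow_sum]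
    exact Fin.prod_univ_eq_prod_range (fun l => 𝒱.card ^ U (l + 1)) L
  rw [h1, h2, ← pow_succ, ← pow_add, ← pow_add]
  congr 1
  have : ∀ l ∈ Finset.range L, (U l + 1) * U (l + 1) = U l * U (l + 1) + U (l + 1) :=
    fun l _ => by ring
  rw [Finset.sum_congr rfl this, Finset.sum_add_distrib]
  omega

lemma card_NNGroup : Fintype.card (NNGroup U L) =
    ∏ l ∈ Finset.range L, Nat.factorial (U (l + 1)) := by
  rw [Fintype.card_pi, ← Fin.prod_univ_eq_prod_range (fun l => Nat.factorial (U (l + 1))) L]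
  exact Finset.prod_congr rfl fun l _ => by
    rw [Fintype.card_perm, Fintype.card_fin]

open MulAction in
lemma card_fixedBy_le (g : NNGroup U L) (hg : g ≠ 1)
    [Fintype (fixedBy (NNState U L 𝒱) g)] :
    Fintype.card (fixedBy (NNState U L 𝒱) g) * 𝒱.card ≤ Fintype.card (NNState U L 𝒱) := by
  -- find a layer and a neuron moved by `g`
  obtain ⟨l₀, hl₀⟩ : ∃ l, g l ≠ 1 := by
    by_contra hc
    push_neg at hc
    exact hg (funext hc)
  obtain ⟨i₀, hi₀⟩ : ∃ i, g l₀ i ≠ i := by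
    by_contra hc
    push_neg at hc
    exact hl₀ (Equiv.ext hc)
  classical
  set f : fixedBy (NNState U L 𝒱) g × 𝒱 → NNState U L 𝒱 := fun p =>
    ⟨p.1.1.1, Function.update p.1.1.2.1 l₀ (Function.update (p.1.1.2.1 l₀) i₀ p.2),
      p.1.1.2.2.1, p.1.1.2.2.2⟩ with hf
  have key : ∀ s : fixedBy (NNState U L 𝒱) g, s.1.2.1 l₀ i₀ = s.1.2.1 l₀ (g l₀ i₀) := by
    rintro ⟨s, hs⟩
    have := congrFun (congrArg (fun t : NNState U L 𝒱 => t.2.1 l₀) hs) (g l₀ i₀)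
    simpa [smul_b] using this
  have hinj : Function.Injective f := by
    rintro ⟨⟨s, hs⟩, a⟩ ⟨⟨t, ht⟩, b⟩ he
    simp only [hf, Prod.mk.injEq] at he
    obtain ⟨hW, hb, hv, hc⟩ := he
    have hab : a = b := by
      have := congrFun (congrArg (fun u => u l₀) hb) i₀
      simpa using this
    have hbst : s.2.1 = t.2.1 := by
      funext l i
      by_cases hl : l₀ = l
      · subst hl
        by_cases hi : i₀ = i
        · subst hi
          have h1 := key ⟨s, hs⟩
          have h2 := key ⟨t, ht⟩
          have h3 : s.2.1 l₀ (g l₀ i₀) = t.2.1 l₀ (g l₀ i₀) := by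
            have := congrFun (congrArg (fun u => u l₀) hb) (g l₀ i₀)
            simpa [Function.update_of_ne hi₀] using this
          rw [h1, h2, h3]
        · have := congrFun (congrArg (fun u => u l₀) hb) i
          simpa [Function.update_of_ne (Ne.symm hi)] using this
      · have := congrFun (congrArg (fun u => u l) hb) i
        simpa [Function.update_of_ne (Ne.symm hl)] using this
    have : s = t := by
      refine Prod.ext hW (Prod.ext hbst (Prod.ext hv hc))
    simp [this, hab]
  have := Fintype.card_le_of_injective f hinj
  rwa [Fintype.card_prod, Fintype.card_coe] at this

end NN3

/-- The hypothesis space of a fully connected network with `L` hidden layers of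
widths `U 1, …, U L` on `n = U 0` inputs, single linear output, activation `σ`,
and all parameters taking values in a finite set `𝒱` of cardinality `V ≥ 1`,
is finite, and its size `|H|` satisfies
`|H| * ∏ l, (U l)! ≤ V ^ P + (∏ l, (U l)! - 1) * V ^ (P - 1)`
where `P` is the total number of parameters. -/
theorem stmt0 (n L : ℕ) (hn : 1 ≤ n) (hL : 1 ≤ L) (U : ℕ → ℕ)
    (hU0 : U 0 = n) (hU : ∀ l, 1 ≤ l → l ≤ L → 1 ≤ U l)
    (σ : ℝ → ℝ) (𝒱 : Finset ℝ) (V : ℕ) (hV : 𝒱.card = V) (hV1 : 1 ≤ V)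
    (P : ℕ) (hP : P = (∑ l ∈ Finset.range L, (U l + 1) * U (l + 1)) + U L + 1)
    (H : Set ((Fin (U 0) → ℝ) → ℝ))
    (hH : H = { h | ∃ (W : (l : ℕ) → Fin (U (l + 1)) → Fin (U l) → ℝ)
        (b : (l : ℕ) → Fin (U (l + 1)) → ℝ) (v : Fin (U L) → ℝ) (c : ℝ),
        (∀ l < L, ∀ i j, W l i j ∈ 𝒱) ∧ (∀ l < L, ∀ i, b l i ∈ 𝒱) ∧
        (∀ j, v j ∈ 𝒱) ∧ c ∈ 𝒱 ∧
        h = fun x => (∑ j, v j * layerOut σ U W b L x j) + c }) :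
    H.Finite ∧
      H.ncard * ∏ l ∈ Finset.range L, Nat.factorial (U (l + 1)) ≤
        V ^ P + ((∏ l ∈ Finset.range L, Nat.factorial (U (l + 1))) - 1) * V ^ (P - 1) := by
  classical
  subst hV hP hH
  set P : ℕ := (∑ l ∈ Finset.range L, (U l + 1) * U (l + 1)) + U L + 1 with hPdef
  -- the set `H` is the range of `realize`
  have hrange : { h | ∃ (W : (l : ℕ) → Fin (U (l + 1)) → Fin (U l) → ℝ)
      (b : (l : ℕ) → Fin (U (l + 1)) → ℝ) (v : Fin (U L) → ℝ) (c : ℝ),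
      (∀ l < L, ∀ i j, W l i j ∈ 𝒱) ∧ (∀ l < L, ∀ i, b l i ∈ 𝒱) ∧
      (∀ j, v j ∈ 𝒱) ∧ c ∈ 𝒱 ∧
      h = fun x => (∑ j, v j * layerOut σ U W b L x j) + c }
      = Set.range (realize σ U L 𝒱) := by
    ext h
    constructor
    · rintro ⟨W, b, v, c, h1, h2, h3, h4, rfl⟩
      refine ⟨⟨fun l i j => ⟨W l.1 i j, h1 l.1 l.2 i j⟩,
        fun l i => ⟨b l.1 i, h2 l.1 l.2 i⟩, fun j => ⟨v j, h3 j⟩, ⟨c, h4⟩⟩, ?_⟩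
      set s : NNState U L 𝒱 := ⟨fun l i j => ⟨W l.1 i j, h1 l.1 l.2 i j⟩,
        fun l i => ⟨b l.1 i, h2 l.1 l.2 i⟩, fun j => ⟨v j, h3 j⟩, ⟨c, h4⟩⟩ with hs
      have hWe : ∀ l < L, Wext U L 𝒱 s l = W l := fun l hl => by
        rw [Wext_pos U L 𝒱 s l hl]
      have hbe : ∀ l < L, bext U L 𝒱 s l = b l := fun l hl => by
        rw [bext_pos U L 𝒱 s l hl]
      have : layerOut σ U (Wext U L 𝒱 s) (bext U L 𝒱 s) L
          = layerOut σ U W b L := layerOut_congr σ U _ _ _ _ L hWe hbe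
      funext x
      show (∑ j, (s.2.2.1 j : ℝ) *
        layerOut σ U (Wext U L 𝒱 s) (bext U L 𝒱 s) L x j) + (s.2.2.2 : ℝ) = _
      rw [this]
    · rintro ⟨s, rfl⟩
      refine ⟨Wext U L 𝒱 s, bext U L 𝒱 s, fun j => (s.2.2.1 j : ℝ), (s.2.2.2 : ℝ),
        fun l hl i j => ?_, fun l hl i => ?_, fun j => (s.2.2.1 j).2, (s.2.2.2).2, rfl⟩
      · rw [Wext_pos U L 𝒱 s l hl]; exact (s.1 ⟨l, hl⟩ i j).2
      · rw [bext_pos U L 𝒱 s l hl]; exact (s.2.1 ⟨l, hl⟩ i).2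
  rw [hrange]
  refine ⟨Set.finite_range _, ?_⟩
  -- instances
  letI : ∀ a : NNGroup U L, Fintype (MulAction.fixedBy (NNState U L 𝒱) a) :=
    fun a => Fintype.ofFinite _
  letI : Fintype (Quotient (MulAction.orbitRel (NNGroup U L) (NNState U L 𝒱))) :=
    Fintype.ofFinite _
  set N : ℕ := Fintype.card (Quotient (MulAction.orbitRel (NNGroup U L) (NNState U L 𝒱)))
  set F : ℕ := ∏ l ∈ Finset.range L, Nat.factorial (U (l + 1)) with hF
  -- `|range realize| ≤ N`
  have hconst : ∀ a b : NNState U L 𝒱, MulAction.orbitRel (NNGroup U L) (NNState U L 𝒱) a b →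
      realize σ U L 𝒱 a = realize σ U L 𝒱 b := by
    intro a b hab
    obtain ⟨g, rfl⟩ := hab
    exact realize_smul σ U L 𝒱 g b
  set Φq := Quotient.lift (realize σ U L 𝒱) hconst with hΦq
  have hr2 : Set.range (realize σ U L 𝒱) = Set.range Φq := by
    ext h
    constructor
    · rintro ⟨s, rfl⟩
      exact ⟨Quotient.mk _ s, rfl⟩
    · rintro ⟨q, rfl⟩
      obtain ⟨s, rfl⟩ := Quotient.exists_rep q
      exact ⟨s, rfl⟩
  have hcard : (Set.range (realize σ U L 𝒱)).ncard ≤ N := by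
    rw [hr2, ← Set.image_univ]
    calc (Φq '' Set.univ).ncard ≤ (Set.univ : Set _).ncard :=
          Set.ncard_image_le Set.finite_univ
      _ = N := by rw [Set.ncard_univ, Nat.card_eq_fintype_card]
  -- Burnside
  have hburn : (∑ g : NNGroup U L,
      Fintype.card (MulAction.fixedBy (NNState U L 𝒱) g)) = N * Fintype.card (NNGroup U L) :=
    MulAction.sum_card_fixedBy_eq_card_orbits_mul_card_group (NNGroup U L) (NNState U L 𝒱)
  have hfix1 : Fintype.card (MulAction.fixedBy (NNState U L 𝒱) (1 : NNGroup U L))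
      = 𝒱.card ^ P := by
    rw [← card_NNState U L 𝒱]
    exact Fintype.card_congr (Equiv.subtypeUnivEquiv (fun s => one_smul _ s))
  have hVpos : 0 < 𝒱.card := hV1
  have hPpos : 1 ≤ P := le_add_self
  have hfixg : ∀ g ∈ Finset.univ.erase (1 : NNGroup U L),
      Fintype.card (MulAction.fixedBy (NNState U L 𝒱) g) ≤ 𝒱.card ^ (P - 1) := by
    intro g hg
    have hg1 : g ≠ 1 := Finset.ne_of_mem_erase hg
    have h := card_fixedBy_le U L 𝒱 g hg1
    rw [card_NNState U L 𝒱] at h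
    have hpow : 𝒱.card ^ P = 𝒱.card ^ (P - 1) * 𝒱.card := by
      rw [← pow_succ, Nat.sub_add_cancel hPpos]
    rw [hpow] at h
    exact Nat.le_of_mul_le_mul_right h hVpos
  have hsum : (∑ g ∈ Finset.univ.erase (1 : NNGroup U L),
      Fintype.card (MulAction.fixedBy (NNState U L 𝒱) g))
      ≤ (Fintype.card (NNGroup U L) - 1) * 𝒱.card ^ (P - 1) := by
    calc (∑ g ∈ Finset.univ.erase (1 : NNGroup U L),
        Fintype.card (MulAction.fixedBy (NNState U L 𝒱) g))
        ≤ (Finset.univ.erase (1 : NNGroup U L)).card * 𝒱.card ^ (P - 1) := by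
          have h := Finset.sum_le_card_nsmul (Finset.univ.erase (1 : NNGroup U L)) _
            (𝒱.card ^ (P - 1)) hfixg
          rwa [smul_eq_mul] at h
      _ = (Fintype.card (NNGroup U L) - 1) * 𝒱.card ^ (P - 1) := by
          rw [Finset.card_erase_of_mem (Finset.mem_univ _), Finset.card_univ]
  have hsplit : (∑ g : NNGroup U L, Fintype.card (MulAction.fixedBy (NNState U L 𝒱) g))
      = Fintype.card (MulAction.fixedBy (NNState U L 𝒱) (1 : NNGroup U L)) +
        ∑ g ∈ Finset.univ.erase (1 : NNGroup U L),
          Fintype.card (MulAction.fixedBy (NNState U L 𝒱) g) :=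
    (Finset.add_sum_erase _ _ (Finset.mem_univ _)).symm
  have hFG : Fintype.card (NNGroup U L) = F := card_NNGroup U L
  calc (Set.range (realize σ U L 𝒱)).ncard * F ≤ N * F := Nat.mul_le_mul_right F hcard
    _ = N * Fintype.card (NNGroup U L) := by rw [hFG]
    _ = 𝒱.card ^ P + ∑ g ∈ Finset.univ.erase (1 : NNGroup U L),
          Fintype.card (MulAction.fixedBy (NNState U L 𝒱) g) := by
        rw [← hburn, hsplit, hfix1]
    _ ≤ 𝒱.card ^ P + (F - 1) * 𝒱.card ^ (P - 1) := by
        rw [← hFG]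
        exact Nat.add_le_add_left hsum _
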